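/- arXiv:2101.09519 — 4 statements merged into one kernel-verified Lean document; each statement's English description precedes it below -/
import Mathlib

section
/- max_{t ∈ [0,1]} ∫₀¹ |G(t,s)| ds ≤ 1/2. -/
open Set MeasureTheory

/-! On the unit square each branch of `G01` is a product of a factor of size at most `1/2` and
a factor of size at most `1`, so `|G01| ≤ 1/2` there; integrating over an interval of length `1`
gives the bound. -/

/-- The Green function of the problem `u''' = ψ`, `u(0) = u'(0) = u'(1) = 0` on `[0,1]`. -/
noncomputable def G01 (t s : ℝ) : ℝ :=
  if s ≤ t then s / 2 * (t ^ 2 - 2 * t + s) else t ^ 2 / 2 * (s - 1)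

lemma abs_G01_le_half {t s : ℝ} (ht : t ∈ Icc (0 : ℝ) 1) (hs : s ∈ Icc (0 : ℝ) 1) :
    |G01 t s| ≤ 1 / 2 := by
  obtain ⟨ht0, ht1⟩ := ht
  obtain ⟨hs0, hs1⟩ := hs
  unfold G01
  split_ifs with hst
  · have hs_half : |s / 2| ≤ 1 / 2 := abs_le.2 ⟨by linarith, by linarith⟩
    have hquad : |t ^ 2 - 2 * t + s| ≤ 1 := abs_le.2 ⟨by nlinarith, by nlinarith⟩
    calc |s / 2 * (t ^ 2 - 2 * t + s)| ≤ 1 / 2 * 1 := by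
          rw [abs_mul]; exact mul_le_mul hs_half hquad (abs_nonneg _) (by norm_num)
      _ = 1 / 2 := mul_one _
  · have ht_half : |t ^ 2 / 2| ≤ 1 / 2 := abs_le.2 ⟨by nlinarith, by nlinarith⟩
    have hlin : |s - 1| ≤ 1 := abs_le.2 ⟨by linarith, by linarith⟩
    calc |t ^ 2 / 2 * (s - 1)| ≤ 1 / 2 * 1 := by
          rw [abs_mul]; exact mul_le_mul ht_half hlin (abs_nonneg _) (by norm_num)
      _ = 1 / 2 := mul_one _

/-- `max_{t ∈ [0,1]} ∫₀¹ |G(t,s)| ds ≤ 1/2`. -/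
theorem green_kernel_integral_bound :
    ∀ t ∈ Icc (0:ℝ) 1, (∫ s in (0:ℝ)..1, |G01 t s|) ≤ 1 / 2 := by
  intro t ht
  have hbound : ∀ s ∈ uIoc (0 : ℝ) 1, ‖|G01 t s|‖ ≤ 1 / 2 := fun s hs => by
    rw [uIoc_of_le zero_le_one] at hs
    rw [Real.norm_eq_abs, abs_abs]
    exact abs_G01_le_half ht (Ioc_subset_Icc_self hs)
  calc (∫ s in (0:ℝ)..1, |G01 t s|) ≤ ‖∫ s in (0:ℝ)..1, |G01 t s|‖ := Real.le_norm_self _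
    _ ≤ 1 / 2 * |1 - 0| := intervalIntegral.norm_integral_le_of_norm_le_const hbound
    _ = 1 / 2 := by norm_num
end

section
/- Suppose ψ: [0,1] → ℝ is continuous and satisfies ψ(t) = f(t, u(t), u(φ(t))) for all t ∈ [0,1], where u(t) = g(t) + ∫₀¹ G(t,s) ψ(s) ds. Then u is three times continuously differentiable on [0,1], u'''(t) = f(t, u(t), u(φ(t))) for all t ∈ [0,1], and u(0) = b1, u'(0) = b2, u'(1) = b3. -/
/-!
Splitting the Green integral at `s = t` gives, for `t ∈ [0,1]`,
`∫₀¹ G(t,s) c(s) ds = (t²/2) ∫₀¹ (s - 1) c(s) ds + ∫₀ᵗ (t - s)²/2 c(s) ds`,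
a quadratic in `t` plus the Cauchy formula for the triple primitive of `c`. Each differentiation
of `∫₀ᵗ (t - s)ᵏ c(s) ds` lowers the power of `t - s` (expanding it leaves only primitives of
`c`, `s c` and `s² c`), so the third derivative is `c`; the boundary values are read off at
`t = 0` and `t = 1`. Extending `ψ` continuously from `[0,1]` to `ℝ` first makes the fundamental
theorem of calculus available at every point.
-/

open Set MeasureTheory

/-- The quadratic polynomial with `g(0) = b1`, `g'(0) = b2`, `g'(1) = b3`. -/
noncomputable def gq (b1 b2 b3 t : ℝ) : ℝ := b1 + b2 * t + (b3 - b2) / 2 * t ^ 2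

open intervalIntegral

theorem contDiff_three_of_hasDerivAt {f f₁ f₂ f₃ : ℝ → ℝ} (h₁ : ∀ x, HasDerivAt f (f₁ x) x)
    (h₂ : ∀ x, HasDerivAt f₁ (f₂ x) x) (h₃ : ∀ x, HasDerivAt f₂ (f₃ x) x)
    (hf₃ : Continuous f₃) : ContDiff ℝ 3 f := by
  have hd₁ : deriv f = f₁ := funext fun x => (h₁ x).deriv
  have hd₂ : deriv f₁ = f₂ := funext fun x => (h₂ x).deriv
  have hd₃ : deriv f₂ = f₃ := funext fun x => (h₃ x).deriv
  rw [show (3 : WithTop ℕ∞) = 2 + 1 from rfl, contDiff_succ_iff_deriv, hd₁,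
    show (2 : WithTop ℕ∞) = 1 + 1 from rfl, contDiff_succ_iff_deriv, hd₂, contDiff_one_iff_deriv,
    hd₃]
  exact ⟨fun x => (h₁ x).differentiableAt, by simp, fun x => (h₂ x).differentiableAt, by simp,
    fun x => (h₃ x).differentiableAt, hf₃⟩

theorem derivWithin_eqOn_of_hasDerivWithinAt {s : Set ℝ} (hs : UniqueDiffOn ℝ s) {u f f' : ℝ → ℝ}
    (hu : EqOn u f s) (hf : ∀ x ∈ s, HasDerivWithinAt f (f' x) s x) :
    EqOn (derivWithin u s) f' s :=
  fun x hx => ((hf x hx).congr_of_mem hu hx).derivWithin (hs x hx)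

theorem G01_of_le {t s : ℝ} (h : s ≤ t) : G01 t s = t ^ 2 / 2 * (s - 1) + (t - s) ^ 2 / 2 := by
  rw [G01, if_pos h]
  ring

theorem G01_of_ge {t s : ℝ} (h : t ≤ s) : G01 t s = t ^ 2 / 2 * (s - 1) := by
  rcases h.eq_or_lt with rfl | h
  · rw [G01_of_le le_rfl]
    ring
  · rw [G01, if_neg h.not_ge]

theorem continuous_G01 (t : ℝ) : Continuous (G01 t) :=
  Continuous.if_le (by fun_prop) (by fun_prop) continuous_id continuous_const
    fun s hs => by rw [hs]; ring

section

variable {c : ℝ → ℝ} (hc : Continuous c)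
include hc

theorem integral_sub_mul_eq (a x : ℝ) :
    ∫ s in a..x, (x - s) * c s = x * (∫ s in a..x, c s) - ∫ s in a..x, s * c s := by
  simp_rw [sub_mul]
  rw [integral_sub ((by fun_prop : Continuous fun s => x * c s).intervalIntegrable _ _)
    ((by fun_prop : Continuous fun s => s * c s).intervalIntegrable _ _),
    intervalIntegral.integral_const_mul]

theorem integral_sub_sq_mul_eq (a x : ℝ) :
    ∫ s in a..x, (x - s) ^ 2 / 2 * c s
      = x ^ 2 / 2 * (∫ s in a..x, c s) - x * (∫ s in a..x, s * c s)
        + ∫ s in a..x, s ^ 2 / 2 * c s := by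
  have h : ∀ s, (x - s) ^ 2 / 2 * c s = x ^ 2 / 2 * c s - x * (s * c s) + s ^ 2 / 2 * c s :=
    fun s => by ring
  simp_rw [h]
  rw [integral_add
    ((by fun_prop : Continuous fun s => x ^ 2 / 2 * c s - x * (s * c s)).intervalIntegrable _ _)
    ((by fun_prop : Continuous fun s => s ^ 2 / 2 * c s).intervalIntegrable _ _),
    integral_sub ((by fun_prop : Continuous fun s => x ^ 2 / 2 * c s).intervalIntegrable _ _)
    ((by fun_prop : Continuous fun s => x * (s * c s)).intervalIntegrable _ _),
    intervalIntegral.integral_const_mul, intervalIntegral.integral_const_mul]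

theorem hasDerivAt_integral_sub_mul (a t : ℝ) :
    HasDerivAt (fun x => ∫ s in a..x, (x - s) * c s) (∫ s in a..t, c s) t := by
  simp_rw [integral_sub_mul_eq hc]
  have hA := (hc.integral_hasStrictDerivAt a t).hasDerivAt
  have hB := ((by fun_prop : Continuous fun s => s * c s).integral_hasStrictDerivAt a t).hasDerivAt
  exact (((hasDerivAt_id' t).mul hA).sub hB).congr_deriv (by ring)

theorem hasDerivAt_integral_sub_sq_mul (a t : ℝ) :
    HasDerivAt (fun x => ∫ s in a..x, (x - s) ^ 2 / 2 * c s) (∫ s in a..t, (t - s) * c s) t := by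
  simp_rw [integral_sub_sq_mul_eq hc, integral_sub_mul_eq hc]
  have hA := (hc.integral_hasStrictDerivAt a t).hasDerivAt
  have hB := ((by fun_prop : Continuous fun s => s * c s).integral_hasStrictDerivAt a t).hasDerivAt
  have hC :=
    ((by fun_prop : Continuous fun s => s ^ 2 / 2 * c s).integral_hasStrictDerivAt a t).hasDerivAt
  exact ((((hasDerivAt_pow 2 t).div_const 2).mul hA).sub ((hasDerivAt_id' t).mul hB)).add hC
    |>.congr_deriv (by ring)

theorem integral_G01_mul {t : ℝ} (ht : t ∈ Icc (0 : ℝ) 1) :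
    ∫ s in (0 : ℝ)..1, G01 t s * c s
      = t ^ 2 / 2 * (∫ s in (0 : ℝ)..1, (s - 1) * c s)
        + ∫ s in (0 : ℝ)..t, (t - s) ^ 2 / 2 * c s := by
  have hG : ∀ a b, IntervalIntegrable (fun s => G01 t s * c s) volume a b :=
    fun a b => ((continuous_G01 t).mul hc).intervalIntegrable a b
  have hK : ∀ a b, IntervalIntegrable (fun s => (s - 1) * c s) volume a b :=
    fun a b => (by fun_prop : Continuous fun s => (s - 1) * c s).intervalIntegrable a b
  have hleft : ∫ s in (0 : ℝ)..t, G01 t s * c s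
      = t ^ 2 / 2 * (∫ s in (0 : ℝ)..t, (s - 1) * c s)
        + ∫ s in (0 : ℝ)..t, (t - s) ^ 2 / 2 * c s := by
    rw [← intervalIntegral.integral_const_mul, ← integral_add ((hK 0 t).const_mul _)
      ((by fun_prop : Continuous fun s => (t - s) ^ 2 / 2 * c s).intervalIntegrable 0 t)]
    refine integral_congr fun s hs => ?_
    rw [uIcc_of_le ht.1] at hs
    simp only [G01_of_le hs.2]
    ring
  have hright : ∫ s in t..1, G01 t s * c s = t ^ 2 / 2 * ∫ s in t..1, (s - 1) * c s := by
    rw [← intervalIntegral.integral_const_mul]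
    refine integral_congr fun s hs => ?_
    rw [uIcc_of_le ht.2] at hs
    simp only [G01_of_ge hs.1]
    ring
  rw [← integral_add_adjacent_intervals (hG 0 t) (hG t 1),
    ← integral_add_adjacent_intervals (hK 0 t) (hK t 1), hleft, hright]
  ring

end

section

variable (b1 b2 b3 : ℝ) {c : ℝ → ℝ}

noncomputable def bvpSolution (c : ℝ → ℝ) (t : ℝ) : ℝ :=
  gq b1 b2 b3 t + t ^ 2 / 2 * (∫ s in (0 : ℝ)..1, (s - 1) * c s)
    + ∫ s in (0 : ℝ)..t, (t - s) ^ 2 / 2 * c s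

variable (hc : Continuous c)
include hc

theorem bvpSolution_eq {t : ℝ} (ht : t ∈ Icc (0 : ℝ) 1) :
    bvpSolution b1 b2 b3 c t = gq b1 b2 b3 t + ∫ s in (0 : ℝ)..1, G01 t s * c s := by
  rw [integral_G01_mul hc ht, bvpSolution, add_assoc]

theorem hasDerivAt_bvpSolution (t : ℝ) :
    HasDerivAt (bvpSolution b1 b2 b3 c)
      (b2 + (b3 - b2) * t + t * (∫ s in (0 : ℝ)..1, (s - 1) * c s)
        + ∫ s in (0 : ℝ)..t, (t - s) * c s) t := by
  have hg : HasDerivAt (gq b1 b2 b3) (b2 + (b3 - b2) * t) t := by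
    have := ((hasDerivAt_id' t).const_mul b2).const_add b1 |>.add
      ((hasDerivAt_pow 2 t).const_mul ((b3 - b2) / 2))
    exact this.congr_deriv (by ring)
  exact (hg.add (((hasDerivAt_pow 2 t).div_const 2).mul_const _) |>.add
    (hasDerivAt_integral_sub_sq_mul hc 0 t)).congr_deriv (by ring)

theorem hasDerivAt_deriv_bvpSolution (t : ℝ) :
    HasDerivAt (fun x => b2 + (b3 - b2) * x + x * (∫ s in (0 : ℝ)..1, (s - 1) * c s)
        + ∫ s in (0 : ℝ)..x, (x - s) * c s)
      (b3 - b2 + (∫ s in (0 : ℝ)..1, (s - 1) * c s) + ∫ s in (0 : ℝ)..t, c s) t := by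
  have := ((hasDerivAt_id' t).const_mul (b3 - b2)).const_add b2 |>.add
    ((hasDerivAt_id' t).mul_const (∫ s in (0 : ℝ)..1, (s - 1) * c s)) |>.add
    (hasDerivAt_integral_sub_mul hc 0 t)
  exact this.congr_deriv (by ring)

end

theorem fixed_point_gives_solution_general
    (b1 b2 b3 : ℝ) (φ : ℝ → ℝ) (f : ℝ → ℝ → ℝ → ℝ)
    (ψ : ℝ → ℝ) (hψ : ContinuousOn ψ (Icc 0 1))
    (u : ℝ → ℝ)
    (hu : ∀ t : ℝ, u t = gq b1 b2 b3 t + ∫ s in (0:ℝ)..1, G01 t s * ψ s)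
    (hfix : ∀ t ∈ Icc (0:ℝ) 1, ψ t = f t (u t) (u (φ t))) :
    ContDiffOn ℝ 3 u (Icc 0 1) ∧
    (∀ t ∈ Icc (0:ℝ) 1,
      derivWithin (derivWithin (derivWithin u (Icc 0 1)) (Icc 0 1)) (Icc 0 1) t
        = f t (u t) (u (φ t))) ∧
    u 0 = b1 ∧ derivWithin u (Icc 0 1) 0 = b2 ∧ derivWithin u (Icc 0 1) 1 = b3 := by
  set c := IccExtend zero_le_one ((Icc (0 : ℝ) 1).domRestrict ψ)
  have hc : Continuous c := hψ.domRestrict.Icc_extend'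
  have hcψ : EqOn c ψ (Icc 0 1) := fun t ht => IccExtend_of_mem _ _ ht
  have hw : EqOn u (bvpSolution b1 b2 b3 c) (Icc 0 1) := fun t ht => by
    rw [hu, bvpSolution_eq b1 b2 b3 hc ht]
    congr 1
    refine integral_congr fun s hs => ?_
    rw [uIcc_of_le zero_le_one] at hs
    rw [hcψ hs]
  have hs : UniqueDiffOn ℝ (Icc (0 : ℝ) 1) := uniqueDiffOn_Icc zero_lt_one
  have d1 := derivWithin_eqOn_of_hasDerivWithinAt hs hw
    fun t _ => (hasDerivAt_bvpSolution b1 b2 b3 hc t).hasDerivWithinAt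
  have d2 := derivWithin_eqOn_of_hasDerivWithinAt hs d1
    fun t _ => (hasDerivAt_deriv_bvpSolution b2 b3 hc t).hasDerivWithinAt
  have hd3 (t : ℝ) := (hc.integral_hasStrictDerivAt 0 t).hasDerivAt.const_add
    (b3 - b2 + ∫ s in (0 : ℝ)..1, (s - 1) * c s)
  have d3 := derivWithin_eqOn_of_hasDerivWithinAt hs d2 fun t _ => (hd3 t).hasDerivWithinAt
  refine ⟨?_, fun t ht => ?_, ?_, ?_, ?_⟩
  · exact (contDiff_three_of_hasDerivAt (hasDerivAt_bvpSolution b1 b2 b3 hc)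
      (hasDerivAt_deriv_bvpSolution b2 b3 hc) hd3 hc).contDiffOn.congr hw
  · rw [d3 ht, hcψ ht, hfix t ht]
  · simp [hw (left_mem_Icc.mpr zero_le_one), bvpSolution, gq]
  · simp [d1 (left_mem_Icc.mpr zero_le_one)]
  · rw [d1 (right_mem_Icc.mpr zero_le_one)]
    have hneg : ∫ s in (0 : ℝ)..1, (1 - s) * c s = -∫ s in (0 : ℝ)..1, (s - 1) * c s := by
      rw [← intervalIntegral.integral_neg]
      congr 1 with s
      ring
    simp only [hneg]
    ring

/-- If a continuous `ψ` satisfies `ψ(t) = f(t, u(t), u(φ(t)))` on `[0,1]`, where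
`u(t) = g(t) + ∫₀¹ G(t,s) ψ(s) ds`, then `u` is three times continuously differentiable on
`[0,1]`, solves `u'''(t) = f(t, u(t), u(φ(t)))` there, and satisfies the boundary conditions
`u(0) = b1`, `u'(0) = b2`, `u'(1) = b3`. -/
theorem fixed_point_gives_solution
    (b1 b2 b3 : ℝ) (φ : ℝ → ℝ) (f : ℝ → ℝ → ℝ → ℝ)
    (hφc : ContinuousOn φ (Icc 0 1)) (hφm : MapsTo φ (Icc 0 1) (Icc 0 1))
    (hfc : ContinuousOn (fun p : ℝ × ℝ × ℝ => f p.1 p.2.1 p.2.2)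
      (Icc 0 1 ×ˢ (univ : Set ℝ) ×ˢ (univ : Set ℝ)))
    (ψ : ℝ → ℝ) (hψ : ContinuousOn ψ (Icc 0 1))
    (u : ℝ → ℝ)
    (hu : ∀ t : ℝ, u t = gq b1 b2 b3 t + ∫ s in (0:ℝ)..1, G01 t s * ψ s)
    (hfix : ∀ t ∈ Icc (0:ℝ) 1, ψ t = f t (u t) (u (φ t))) :
    ContDiffOn ℝ 3 u (Icc 0 1) ∧
    (∀ t ∈ Icc (0:ℝ) 1,
      derivWithin (derivWithin (derivWithin u (Icc 0 1)) (Icc 0 1)) (Icc 0 1) t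
        = f t (u t) (u (φ t))) ∧
    u 0 = b1 ∧ derivWithin u (Icc 0 1) 0 = b2 ∧ derivWithin u (Icc 0 1) 1 = b3 :=
  fixed_point_gives_solution_general b1 b2 b3 φ f ψ hψ u hu hfix
end

section
/- Assume |f(t,u,v)| ≤ M for all (t,u,v) ∈ D_M, and that f satisfies the Lipschitz conditions |f(t,u2,v2) − f(t,u1,v1)| ≤ L1|u2 − u1| + L2|v2 − v1| for all (t,u1,v1), (t,u2,v2) ∈ D_M, with constants L1, L2 ≥ 0. Then for all continuous ψ1, ψ2: [0,a] → ℝ with ‖ψ1‖ ≤ M and ‖ψ2‖ ≤ M, one has ‖Aψ2 − Aψ1‖ ≤ (L1 + L2) M0 ‖ψ2 − ψ1‖. In particular, if q := (L1 + L2) M0 < 1, then A is a contraction on the closed ball B[0,M] in C[0,a]. -/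
/-!
Write `u_ψ(t) = g t + ∫₀ᵃ G(t,s) ψ(s) ds`. For `‖ψ‖ ≤ M` the bound `|∫₀ᵃ G(t,s) ψ(s) ds| ≤ M0 ‖ψ‖`
keeps `u_ψ(t)` and `u_ψ(φ t)` inside the box `|·| ≤ ‖g‖ + M0 M` on which `f` is Lipschitz, and by
linearity the same bound gives `|u_ψ₂ - u_ψ₁| ≤ M0 ‖ψ₂ - ψ₁‖` at every point of `[0,a]`. The two
Lipschitz terms then add up to `(L1 + L2) M0 ‖ψ₂ - ψ₁‖`.
-/

open Set MeasureTheory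

theorem abs_intervalIntegral_mul_le {a b C : ℝ} {k h : ℝ → ℝ} (hab : a ≤ b)
    (hk : IntervalIntegrable k volume a b) (hC : ∀ s ∈ Icc a b, |h s| ≤ C) :
    |∫ s in a..b, k s * h s| ≤ C * ∫ s in a..b, |k s| := by
  rw [← intervalIntegral.integral_const_mul, ← Real.norm_eq_abs]
  refine intervalIntegral.norm_integral_le_of_norm_le hab
    (Filter.Eventually.of_forall fun s hs => ?_) (hk.abs.const_mul C)
  rw [Real.norm_eq_abs, abs_mul, mul_comm]
  exact mul_le_mul_of_nonneg_right (hC s (Ioc_subset_Icc_self hs)) (abs_nonneg _)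

noncomputable def fredholmMap (a : ℝ) (g : ℝ → ℝ) (G : ℝ → ℝ → ℝ) (ψ : ℝ → ℝ) (t : ℝ) : ℝ :=
  g t + ∫ s in (0:ℝ)..a, G t s * ψ s

section fredholmMap

variable {a : ℝ} {g : ℝ → ℝ} {G : ℝ → ℝ → ℝ} {t M0 : ℝ}

theorem abs_fredholmMap_le (ha : 0 ≤ a) (hGt : ContinuousOn (G t) (Icc 0 a))
    (hGint : ∫ s in (0:ℝ)..a, |G t s| ≤ M0) {ng : ℝ} (hgt : |g t| ≤ ng)
    {ψ : ℝ → ℝ} {M : ℝ} (hM : 0 ≤ M) (hψ : ∀ s ∈ Icc 0 a, |ψ s| ≤ M) :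
    |fredholmMap a g G ψ t| ≤ ng + M0 * M := by
  have hint : |∫ s in (0:ℝ)..a, G t s * ψ s| ≤ M * ∫ s in (0:ℝ)..a, |G t s| :=
    abs_intervalIntegral_mul_le ha (hGt.intervalIntegrable_of_Icc ha) hψ
  calc |fredholmMap a g G ψ t| ≤ |g t| + |∫ s in (0:ℝ)..a, G t s * ψ s| := abs_add_le _ _
    _ ≤ ng + M0 * M := by
      gcongr
      exact hint.trans (by rw [mul_comm]; exact mul_le_mul_of_nonneg_right hGint hM)

theorem abs_fredholmMap_sub_le (ha : 0 ≤ a) (hGt : ContinuousOn (G t) (Icc 0 a))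
    (hGint : ∫ s in (0:ℝ)..a, |G t s| ≤ M0) {ψ₁ ψ₂ : ℝ → ℝ}
    (hψ₁ : ContinuousOn ψ₁ (Icc 0 a)) (hψ₂ : ContinuousOn ψ₂ (Icc 0 a))
    {d : ℝ} (hd : 0 ≤ d) (hψd : ∀ s ∈ Icc 0 a, |ψ₂ s - ψ₁ s| ≤ d) :
    |fredholmMap a g G ψ₂ t - fredholmMap a g G ψ₁ t| ≤ M0 * d := by
  have hsub : fredholmMap a g G ψ₂ t - fredholmMap a g G ψ₁ t
      = ∫ s in (0:ℝ)..a, G t s * (ψ₂ s - ψ₁ s) := by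
    simp only [fredholmMap, mul_sub]
    rw [intervalIntegral.integral_sub (f := fun s => G t s * ψ₂ s) (g := fun s => G t s * ψ₁ s)
      ((hGt.mul hψ₂).intervalIntegrable_of_Icc ha) ((hGt.mul hψ₁).intervalIntegrable_of_Icc ha)]
    ring
  rw [hsub, mul_comm]
  exact (abs_intervalIntegral_mul_le ha (hGt.intervalIntegrable_of_Icc ha) hψd).trans
    (mul_le_mul_of_nonneg_left hGint hd)

end fredholmMap

theorem operator_is_contraction_general
    (a : ℝ) (ha : 0 < a)
    (φ : ℝ → ℝ) (hφm : MapsTo φ (Icc 0 a) (Icc 0 a))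
    (G : ℝ → ℝ → ℝ)
    (hG : ContinuousOn (fun p : ℝ × ℝ => G p.1 p.2) (Icc 0 a ×ˢ Icc 0 a))
    (g : ℝ → ℝ)
    (M0 : ℝ) (hM0 : IsGreatest ((fun t => ∫ s in (0:ℝ)..a, |G t s|) '' Icc 0 a) M0)
    (ng : ℝ) (hng : IsGreatest ((fun t => |g t|) '' Icc 0 a) ng)
    (f : ℝ → ℝ → ℝ → ℝ)
    (M : ℝ) (hM : 0 < M)
    (L1 L2 : ℝ) (hL1 : 0 ≤ L1) (hL2 : 0 ≤ L2)
    (hLip : ∀ t ∈ Icc (0:ℝ) a, ∀ u1 u2 v1 v2 : ℝ,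
      |u1| ≤ ng + M0 * M → |u2| ≤ ng + M0 * M →
      |v1| ≤ ng + M0 * M → |v2| ≤ ng + M0 * M →
      |f t u2 v2 - f t u1 v1| ≤ L1 * |u2 - u1| + L2 * |v2 - v1|)
    (ψ1 ψ2 : ℝ → ℝ)
    (hψ1c : ContinuousOn ψ1 (Icc 0 a)) (hψ1M : ∀ t ∈ Icc (0:ℝ) a, |ψ1 t| ≤ M)
    (hψ2c : ContinuousOn ψ2 (Icc 0 a)) (hψ2M : ∀ t ∈ Icc (0:ℝ) a, |ψ2 t| ≤ M)
    (dd : ℝ) (hdd : IsGreatest ((fun t => |ψ2 t - ψ1 t|) '' Icc 0 a) dd) :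
    ∀ t ∈ Icc (0:ℝ) a,
      |f t (g t + ∫ s in (0:ℝ)..a, G t s * ψ2 s)
          (g (φ t) + ∫ s in (0:ℝ)..a, G (φ t) s * ψ2 s)
        - f t (g t + ∫ s in (0:ℝ)..a, G t s * ψ1 s)
          (g (φ t) + ∫ s in (0:ℝ)..a, G (φ t) s * ψ1 s)|
        ≤ (L1 + L2) * M0 * dd := by
  intro t ht
  have hdd0 : 0 ≤ dd := by obtain ⟨s, -, rfl⟩ := hdd.1; exact abs_nonneg _
  have hGr : ∀ r ∈ Icc 0 a, ContinuousOn (G r) (Icc 0 a) := fun r hr =>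
    hG.comp (continuousOn_const.prodMk continuousOn_id) fun s hs => ⟨hr, hs⟩
  have hbox : ∀ r ∈ Icc 0 a, ∀ ψ, (∀ s ∈ Icc 0 a, |ψ s| ≤ M) →
      |fredholmMap a g G ψ r| ≤ ng + M0 * M := fun r hr _ hψ =>
    abs_fredholmMap_le ha.le (hGr r hr) (hM0.2 ⟨r, hr, rfl⟩) (hng.2 ⟨r, hr, rfl⟩) hM.le hψ
  have hdiff : ∀ r ∈ Icc 0 a, |fredholmMap a g G ψ2 r - fredholmMap a g G ψ1 r| ≤ M0 * dd :=
    fun r hr => abs_fredholmMap_sub_le ha.le (hGr r hr) (hM0.2 ⟨r, hr, rfl⟩) hψ1c hψ2c hdd0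
      fun s hs => hdd.2 ⟨s, hs, rfl⟩
  have hφt := hφm ht
  calc _ ≤ L1 * |fredholmMap a g G ψ2 t - fredholmMap a g G ψ1 t|
        + L2 * |fredholmMap a g G ψ2 (φ t) - fredholmMap a g G ψ1 (φ t)| :=
      hLip t ht _ _ _ _ (hbox t ht _ hψ1M) (hbox t ht _ hψ2M)
        (hbox _ hφt _ hψ1M) (hbox _ hφt _ hψ2M)
    _ ≤ L1 * (M0 * dd) + L2 * (M0 * dd) := by gcongr <;> exact hdiff _ ‹_›
    _ = (L1 + L2) * M0 * dd := by ring

/-- If `|f| ≤ M` on `D_M` and `f` is Lipschitz in its last two variables on `D_M` with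
constants `L1, L2 ≥ 0`, then for all continuous `ψ1, ψ2` in the ball `B[0,M]` one has
`‖Aψ2 − Aψ1‖ ≤ (L1 + L2) M0 ‖ψ2 − ψ1‖`; in particular `A` is a contraction on `B[0,M]`
whenever `q := (L1 + L2) M0 < 1`. -/
theorem operator_is_contraction
    (a : ℝ) (ha : 0 < a)
    (φ : ℝ → ℝ) (hφc : ContinuousOn φ (Icc 0 a)) (hφm : MapsTo φ (Icc 0 a) (Icc 0 a))
    (G : ℝ → ℝ → ℝ)
    (hG : ContinuousOn (fun p : ℝ × ℝ => G p.1 p.2) (Icc 0 a ×ˢ Icc 0 a))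
    (g : ℝ → ℝ) (hg : ContinuousOn g (Icc 0 a))
    (M0 : ℝ) (hM0 : IsGreatest ((fun t => ∫ s in (0:ℝ)..a, |G t s|) '' Icc 0 a) M0)
    (ng : ℝ) (hng : IsGreatest ((fun t => |g t|) '' Icc 0 a) ng)
    (f : ℝ → ℝ → ℝ → ℝ)
    (hfc : ContinuousOn (fun p : ℝ × ℝ × ℝ => f p.1 p.2.1 p.2.2)
      (Icc 0 a ×ˢ (univ : Set ℝ) ×ˢ (univ : Set ℝ)))
    (M : ℝ) (hM : 0 < M)
    (hbound : ∀ t ∈ Icc (0:ℝ) a, ∀ u v : ℝ,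
      |u| ≤ ng + M0 * M → |v| ≤ ng + M0 * M → |f t u v| ≤ M)
    (L1 L2 : ℝ) (hL1 : 0 ≤ L1) (hL2 : 0 ≤ L2)
    (hLip : ∀ t ∈ Icc (0:ℝ) a, ∀ u1 u2 v1 v2 : ℝ,
      |u1| ≤ ng + M0 * M → |u2| ≤ ng + M0 * M →
      |v1| ≤ ng + M0 * M → |v2| ≤ ng + M0 * M →
      |f t u2 v2 - f t u1 v1| ≤ L1 * |u2 - u1| + L2 * |v2 - v1|)
    (ψ1 ψ2 : ℝ → ℝ)
    (hψ1c : ContinuousOn ψ1 (Icc 0 a)) (hψ1M : ∀ t ∈ Icc (0:ℝ) a, |ψ1 t| ≤ M)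
    (hψ2c : ContinuousOn ψ2 (Icc 0 a)) (hψ2M : ∀ t ∈ Icc (0:ℝ) a, |ψ2 t| ≤ M)
    (dd : ℝ) (hdd : IsGreatest ((fun t => |ψ2 t - ψ1 t|) '' Icc 0 a) dd) :
    ∀ t ∈ Icc (0:ℝ) a,
      |f t (g t + ∫ s in (0:ℝ)..a, G t s * ψ2 s)
          (g (φ t) + ∫ s in (0:ℝ)..a, G (φ t) s * ψ2 s)
        - f t (g t + ∫ s in (0:ℝ)..a, G t s * ψ1 s)
          (g (φ t) + ∫ s in (0:ℝ)..a, G (φ t) s * ψ1 s)|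
        ≤ (L1 + L2) * M0 * dd :=
  operator_is_contraction_general a ha φ hφm G hG g M0 hM0 ng hng f M hM L1 L2 hL1 hL2 hLip ψ1 ψ2
    hψ1c hψ1M hψ2c hψ2M dd hdd
end

section
/- Assume |f(t,u,v)| ≤ M on D_M, the Lipschitz conditions |f(t,u2,v2) − f(t,u1,v1)| ≤ L1|u2 − u1| + L2|v2 − v1| on D_M, and q := (L1 + L2) M0 < 1. Define the iteration ψ_0(t) = f(t,0,0), u_k(t) = g(t) + ∫₀ᵃ G(t,s) ψ_k(s) ds, and ψ_{k+1}(t) = f(t, u_k(t), u_k(φ(t))) for k = 0, 1, 2, …. Let u be the unique continuous function with |u(t)| ≤ ‖g‖ + M0 M satisfying u(t) = g(t) + ∫₀ᵃ G(t,s) f(s, u(s), u(φ(s))) ds for all t. Then for every k ≥ 0, ‖u_k − u‖ ≤ M0 p_k d, where p_k = q^k/(1 − q) and d = ‖ψ_1 − ψ_0‖. -/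
/-!
Put `ψ* t = f(t, u(t), u(φ(t)))`, so that `u = g + ∫ G ψ*` and `|u_k − u| ≤ M0 ‖ψ_k − ψ*‖`.
All of `u`, `u_k` stay in `D_M`, so the Lipschitz condition gives
`‖ψ_{k+1} − ψ*‖ ≤ (L1 + L2) M0 ‖ψ_k − ψ*‖ = q ‖ψ_k − ψ*‖`, whence `‖ψ_k − ψ*‖ ≤ q^k ‖ψ_0 − ψ*‖`.
Finally `‖ψ_0 − ψ*‖ ≤ ‖ψ_0 − ψ_1‖ + ‖ψ_1 − ψ*‖ ≤ d + q ‖ψ_0 − ψ*‖`, i.e. `‖ψ_0 − ψ*‖ ≤ d / (1 − q)`.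
-/

open Set MeasureTheory

/-- `u_ψ(t) = g(t) + ∫₀ᵃ G(t,s) ψ(s) ds`. -/
noncomputable def uOf (a : ℝ) (G : ℝ → ℝ → ℝ) (g : ℝ → ℝ) (ψ : ℝ → ℝ) (t : ℝ) : ℝ :=
  g t + ∫ s in (0:ℝ)..a, G t s * ψ s

/-- The iteration `ψ₀(t) = f(t,0,0)`, `ψ_{k+1}(t) = f(t, u_k(t), u_k(φ(t)))`, where
`u_k(t) = g(t) + ∫₀ᵃ G(t,s) ψ_k(s) ds`. -/
noncomputable def psiIter (a : ℝ) (G : ℝ → ℝ → ℝ) (g : ℝ → ℝ) (f : ℝ → ℝ → ℝ → ℝ)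
    (φ : ℝ → ℝ) : ℕ → ℝ → ℝ
  | 0 => fun t => f t 0 0
  | k + 1 => fun t =>
      f t (uOf a G g (psiIter a G g f φ k) t) (uOf a G g (psiIter a G g f φ k) (φ t))

theorem continuousOn_intervalIntegral_of_continuousOn_prod {F : ℝ → ℝ → ℝ} {a b c d : ℝ}
    (hab : a ≤ b) (hcd : c ≤ d)
    (hF : ContinuousOn (fun p : ℝ × ℝ => F p.1 p.2) (Icc a b ×ˢ Icc c d)) :
    ContinuousOn (fun t => ∫ s in c..d, F t s) (Icc a b) := by
  -- Clamping both variables extends `F` to a continuous function on the whole plane.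
  have hF' : Continuous fun p : ℝ × ℝ => F (projIcc a b hab p.1) (projIcc c d hcd p.2) :=
    hF.comp_continuous
      (((continuous_subtype_val.comp continuous_projIcc).comp continuous_fst).prodMk
        ((continuous_subtype_val.comp continuous_projIcc).comp continuous_snd))
      fun p => mk_mem_prod (projIcc a b hab p.1).2 (projIcc c d hcd p.2).2
  refine (intervalIntegral.continuous_parametric_intervalIntegral_of_continuous'
    (f := fun t s => F (projIcc a b hab t) (projIcc c d hcd s)) hF' c d).continuousOn.congr
    fun t ht => intervalIntegral.integral_congr fun s hs => ?_
  rw [uIcc_of_le hcd] at hs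
  simp [projIcc_of_mem _ ht, projIcc_of_mem _ hs]

theorem abs_integral_mul_le {K h : ℝ → ℝ} {a b C : ℝ} (hab : a ≤ b)
    (hK : IntervalIntegrable K volume a b) (hh : ∀ s ∈ Icc a b, |h s| ≤ C) :
    |∫ s in a..b, K s * h s| ≤ (∫ s in a..b, |K s|) * C := by
  rw [← intervalIntegral.integral_mul_const, ← Real.norm_eq_abs]
  refine intervalIntegral.norm_integral_le_of_norm_le hab (ae_of_all _ fun s hs => ?_)
    (hK.abs.mul_const C)
  rw [Real.norm_eq_abs, abs_mul]
  exact mul_le_mul_of_nonneg_left (hh s (Ioc_subset_Icc_self hs)) (abs_nonneg _)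

section LinearPart

variable {a : ℝ} {G : ℝ → ℝ → ℝ} {g : ℝ → ℝ}

theorem intervalIntegrable_of_continuousOn_prod (ha : 0 ≤ a)
    (hG : ContinuousOn (fun p : ℝ × ℝ => G p.1 p.2) (Icc 0 a ×ˢ Icc 0 a))
    {t : ℝ} (ht : t ∈ Icc 0 a) : IntervalIntegrable (G t) volume 0 a :=
  ContinuousOn.intervalIntegrable_of_Icc ha <|
    hG.comp (continuousOn_const.prodMk continuousOn_id) fun _ hs => ⟨ht, hs⟩

theorem continuousOn_uOf (ha : 0 ≤ a)
    (hG : ContinuousOn (fun p : ℝ × ℝ => G p.1 p.2) (Icc 0 a ×ˢ Icc 0 a))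
    (hg : ContinuousOn g (Icc 0 a)) {ψ : ℝ → ℝ} (hψ : ContinuousOn ψ (Icc 0 a)) :
    ContinuousOn (uOf a G g ψ) (Icc 0 a) :=
  hg.add <| continuousOn_intervalIntegral_of_continuousOn_prod ha ha <|
    hG.mul (hψ.comp continuousOn_snd fun _ hp => hp.2)

theorem abs_uOf_le (ha : 0 ≤ a)
    (hG : ContinuousOn (fun p : ℝ × ℝ => G p.1 p.2) (Icc 0 a ×ˢ Icc 0 a))
    {M0 ng M : ℝ} (hM0 : ∀ t ∈ Icc 0 a, ∫ s in (0:ℝ)..a, |G t s| ≤ M0)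
    (hng : ∀ t ∈ Icc 0 a, |g t| ≤ ng) {ψ : ℝ → ℝ} (hψ : ∀ s ∈ Icc 0 a, |ψ s| ≤ M)
    {t : ℝ} (ht : t ∈ Icc 0 a) : |uOf a G g ψ t| ≤ ng + M0 * M := by
  have hM : 0 ≤ M := (abs_nonneg _).trans (hψ t ht)
  calc |uOf a G g ψ t| ≤ |g t| + |∫ s in (0:ℝ)..a, G t s * ψ s| := abs_add_le _ _
    _ ≤ ng + M0 * M := add_le_add (hng t ht) <|
        (abs_integral_mul_le ha (intervalIntegrable_of_continuousOn_prod ha hG ht) hψ).trans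
          (mul_le_mul_of_nonneg_right (hM0 t ht) hM)

theorem abs_uOf_sub_uOf_le (ha : 0 ≤ a)
    (hG : ContinuousOn (fun p : ℝ × ℝ => G p.1 p.2) (Icc 0 a ×ˢ Icc 0 a))
    {M0 C : ℝ} (hM0 : ∀ t ∈ Icc 0 a, ∫ s in (0:ℝ)..a, |G t s| ≤ M0)
    {ψ χ : ℝ → ℝ} (hψ : ContinuousOn ψ (Icc 0 a)) (hχ : ContinuousOn χ (Icc 0 a))
    (hψχ : ∀ s ∈ Icc 0 a, |ψ s - χ s| ≤ C) {t : ℝ} (ht : t ∈ Icc 0 a) :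
    |uOf a G g ψ t - uOf a G g χ t| ≤ M0 * C := by
  have hC : 0 ≤ C := (abs_nonneg _).trans (hψχ t ht)
  have hGt := intervalIntegrable_of_continuousOn_prod ha hG ht
  have hint : ∀ {w : ℝ → ℝ}, ContinuousOn w (Icc 0 a) →
      IntervalIntegrable (fun s => G t s * w s) volume 0 a :=
    fun hw => hGt.mul_continuousOn (by rwa [uIcc_of_le ha])
  have hsub : uOf a G g ψ t - uOf a G g χ t = ∫ s in (0:ℝ)..a, G t s * (ψ s - χ s) := by
    simp only [uOf, mul_sub, intervalIntegral.integral_sub (hint hψ) (hint hχ)]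
    ring
  rw [hsub]
  exact (abs_integral_mul_le ha hGt hψχ).trans (mul_le_mul_of_nonneg_right (hM0 t ht) hC)

end LinearPart

def nemytskii (f : ℝ → ℝ → ℝ → ℝ) (φ : ℝ → ℝ) (w : ℝ → ℝ) (t : ℝ) : ℝ :=
  f t (w t) (w (φ t))

section Superposition

variable {f : ℝ → ℝ → ℝ → ℝ} {φ : ℝ → ℝ} {s : Set ℝ}

theorem continuousOn_nemytskii
    (hf : ContinuousOn (fun p : ℝ × ℝ × ℝ => f p.1 p.2.1 p.2.2) (s ×ˢ univ ×ˢ univ))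
    (hφc : ContinuousOn φ s) (hφm : MapsTo φ s s) {w : ℝ → ℝ} (hw : ContinuousOn w s) :
    ContinuousOn (nemytskii f φ w) s :=
  hf.comp (continuousOn_id.prodMk (hw.prodMk (hw.comp hφc hφm)))
    fun _ ht => mk_mem_prod ht (mk_mem_prod (mem_univ _) (mem_univ _))

theorem abs_nemytskii_sub_le {B L1 L2 C : ℝ} (hL1 : 0 ≤ L1) (hL2 : 0 ≤ L2)
    (hLip : ∀ t ∈ s, ∀ u1 u2 v1 v2 : ℝ, |u1| ≤ B → |u2| ≤ B → |v1| ≤ B → |v2| ≤ B →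
      |f t u2 v2 - f t u1 v1| ≤ L1 * |u2 - u1| + L2 * |v2 - v1|)
    (hφm : MapsTo φ s s) {w₁ w₂ : ℝ → ℝ} (hw₁ : ∀ x ∈ s, |w₁ x| ≤ B) (hw₂ : ∀ x ∈ s, |w₂ x| ≤ B)
    (hw : ∀ x ∈ s, |w₂ x - w₁ x| ≤ C) {t : ℝ} (ht : t ∈ s) :
    |nemytskii f φ w₂ t - nemytskii f φ w₁ t| ≤ (L1 + L2) * C :=
  calc |nemytskii f φ w₂ t - nemytskii f φ w₁ t|
      ≤ L1 * |w₂ t - w₁ t| + L2 * |w₂ (φ t) - w₁ (φ t)| :=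
        hLip t ht _ _ _ _ (hw₁ t ht) (hw₂ t ht) (hw₁ _ (hφm ht)) (hw₂ _ (hφm ht))
    _ ≤ L1 * C + L2 * C := by gcongr <;> [exact hw t ht; exact hw _ (hφm ht)]
    _ = (L1 + L2) * C := by ring

end Superposition

theorem psiIter_succ (a : ℝ) (G : ℝ → ℝ → ℝ) (g : ℝ → ℝ) (f : ℝ → ℝ → ℝ → ℝ) (φ : ℝ → ℝ)
    (k : ℕ) : psiIter a G g f φ (k + 1) = nemytskii f φ (uOf a G g (psiIter a G g f φ k)) :=
  rfl

theorem psiIter_continuousOn_and_abs_le {a : ℝ} {G : ℝ → ℝ → ℝ} {g : ℝ → ℝ}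
    {f : ℝ → ℝ → ℝ → ℝ} {φ : ℝ → ℝ} {M0 ng M : ℝ} (ha : 0 ≤ a)
    (hφc : ContinuousOn φ (Icc 0 a)) (hφm : MapsTo φ (Icc 0 a) (Icc 0 a))
    (hG : ContinuousOn (fun p : ℝ × ℝ => G p.1 p.2) (Icc 0 a ×ˢ Icc 0 a))
    (hg : ContinuousOn g (Icc 0 a))
    (hM0 : ∀ t ∈ Icc 0 a, ∫ s in (0:ℝ)..a, |G t s| ≤ M0)
    (hng : ∀ t ∈ Icc 0 a, |g t| ≤ ng)
    (hf : ContinuousOn (fun p : ℝ × ℝ × ℝ => f p.1 p.2.1 p.2.2) (Icc 0 a ×ˢ univ ×ˢ univ))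
    (hbound : ∀ t ∈ Icc 0 a, ∀ u v : ℝ, |u| ≤ ng + M0 * M → |v| ≤ ng + M0 * M → |f t u v| ≤ M)
    (hB : 0 ≤ ng + M0 * M) (k : ℕ) :
    ContinuousOn (psiIter a G g f φ k) (Icc 0 a) ∧
      ∀ t ∈ Icc 0 a, |psiIter a G g f φ k t| ≤ M := by
  induction k with
  | zero =>
    have h0 : |(0:ℝ)| ≤ ng + M0 * M := by rwa [abs_zero]
    exact ⟨continuousOn_nemytskii hf hφc hφm continuousOn_const,
      fun t ht => hbound t ht 0 0 h0 h0⟩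
  | succ k ih =>
    have hu : ∀ x ∈ Icc 0 a, |uOf a G g (psiIter a G g f φ k) x| ≤ ng + M0 * M :=
      fun x hx => abs_uOf_le ha hG hM0 hng ih.2 hx
    exact ⟨continuousOn_nemytskii hf hφc hφm (continuousOn_uOf ha hG hg ih.1),
      fun t ht => hbound t ht _ _ (hu t ht) (hu _ (hφm ht))⟩

theorem abs_sub_le_of_contracting_iterate {s : Set ℝ} (hs : IsCompact s) (hne : s.Nonempty)
    {ψ : ℕ → ℝ → ℝ} {ψs : ℝ → ℝ} (hψ₀ : ContinuousOn (ψ 0) s) (hψs : ContinuousOn ψs s)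
    {q d : ℝ} (hq₀ : 0 ≤ q) (hq₁ : q < 1)
    (hstep : ∀ k C, (∀ x ∈ s, |ψ k x - ψs x| ≤ C) → ∀ x ∈ s, |ψ (k + 1) x - ψs x| ≤ q * C)
    (hd : ∀ x ∈ s, |ψ 1 x - ψ 0 x| ≤ d) (k : ℕ) :
    ∀ x ∈ s, |ψ k x - ψs x| ≤ q ^ k / (1 - q) * d := by
  obtain ⟨x₀, hx₀, hmax⟩ := hs.exists_isMaxOn hne (hψ₀.sub hψs).abs
  set e := |ψ 0 x₀ - ψs x₀|
  have he : ∀ x ∈ s, |ψ 0 x - ψs x| ≤ e := fun x hx => hmax hx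
  -- The triangle inequality through `ψ 1` gives `e ≤ d + q e`.
  have he_le : e ≤ d / (1 - q) := by
    have h1 : |ψ 1 x₀ - ψs x₀| ≤ q * e := hstep 0 e he x₀ hx₀
    have h2 : |ψ 0 x₀ - ψ 1 x₀| ≤ d := abs_sub_comm (ψ 1 x₀) _ ▸ hd x₀ hx₀
    rw [le_div_iff₀ (by linarith)]
    linarith [abs_sub_le (ψ 0 x₀) (ψ 1 x₀) (ψs x₀)]
  have hgeom : ∀ k, ∀ x ∈ s, |ψ k x - ψs x| ≤ q ^ k * e := by
    intro k
    induction k with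
    | zero => simpa using he
    | succ k ih => simpa [pow_succ, mul_comm q, mul_assoc] using hstep k _ ih
  intro x hx
  calc |ψ k x - ψs x| ≤ q ^ k * e := hgeom k x hx
    _ ≤ q ^ k * (d / (1 - q)) := mul_le_mul_of_nonneg_left he_le (pow_nonneg hq₀ k)
    _ = q ^ k / (1 - q) * d := by ring

theorem iterative_method_convergence_general
    (a : ℝ)
    (φ : ℝ → ℝ) (hφc : ContinuousOn φ (Icc 0 a)) (hφm : MapsTo φ (Icc 0 a) (Icc 0 a))
    (G : ℝ → ℝ → ℝ)
    (hG : ContinuousOn (fun p : ℝ × ℝ => G p.1 p.2) (Icc 0 a ×ˢ Icc 0 a))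
    (g : ℝ → ℝ) (hg : ContinuousOn g (Icc 0 a))
    (M0 : ℝ) (hM0 : IsGreatest ((fun t => ∫ s in (0:ℝ)..a, |G t s|) '' Icc 0 a) M0)
    (ng : ℝ) (hng : IsGreatest ((fun t => |g t|) '' Icc 0 a) ng)
    (f : ℝ → ℝ → ℝ → ℝ)
    (hfc : ContinuousOn (fun p : ℝ × ℝ × ℝ => f p.1 p.2.1 p.2.2)
      (Icc 0 a ×ˢ (univ : Set ℝ) ×ˢ (univ : Set ℝ)))
    (M : ℝ)
    (hbound : ∀ t ∈ Icc (0:ℝ) a, ∀ u v : ℝ,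
      |u| ≤ ng + M0 * M → |v| ≤ ng + M0 * M → |f t u v| ≤ M)
    (L1 L2 : ℝ) (hL1 : 0 ≤ L1) (hL2 : 0 ≤ L2)
    (hLip : ∀ t ∈ Icc (0:ℝ) a, ∀ u1 u2 v1 v2 : ℝ,
      |u1| ≤ ng + M0 * M → |u2| ≤ ng + M0 * M →
      |v1| ≤ ng + M0 * M → |v2| ≤ ng + M0 * M →
      |f t u2 v2 - f t u1 v1| ≤ L1 * |u2 - u1| + L2 * |v2 - v1|)
    (hq : (L1 + L2) * M0 < 1)
    (u : ℝ → ℝ) (huc : ContinuousOn u (Icc 0 a))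
    (hub : ∀ t ∈ Icc (0:ℝ) a, |u t| ≤ ng + M0 * M)
    (hueq : ∀ t ∈ Icc (0:ℝ) a,
      u t = g t + ∫ s in (0:ℝ)..a, G t s * f s (u s) (u (φ s)))
    (d : ℝ)
    (hd : IsGreatest
      ((fun t => |psiIter a G g f φ 1 t - psiIter a G g f φ 0 t|) '' Icc 0 a) d) :
    ∀ k : ℕ, ∀ t ∈ Icc (0:ℝ) a,
      |uOf a G g (psiIter a G g f φ k) t - u t|
        ≤ M0 * (((L1 + L2) * M0) ^ k / (1 - (L1 + L2) * M0)) * d := by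
  intro k t ht
  obtain ⟨t₀, ht₀, -⟩ := hM0.1
  have ha : 0 ≤ a := ht₀.1.trans ht₀.2
  have hGint : ∀ t ∈ Icc 0 a, ∫ s in (0:ℝ)..a, |G t s| ≤ M0 := fun t ht => hM0.2 ⟨t, ht, rfl⟩
  have hgb : ∀ t ∈ Icc 0 a, |g t| ≤ ng := fun t ht => hng.2 ⟨t, ht, rfl⟩
  have hM0_nonneg : 0 ≤ M0 :=
    (intervalIntegral.integral_nonneg ha fun _ _ => abs_nonneg _).trans (hGint t₀ ht₀)
  have hψ := psiIter_continuousOn_and_abs_le ha hφc hφm hG hg hGint hgb hfc hbound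
    ((abs_nonneg _).trans (hub t₀ ht₀))
  set ψs := nemytskii f φ u
  have hψs : ContinuousOn ψs (Icc 0 a) := continuousOn_nemytskii hfc hφc hφm huc
  have hu : EqOn u (uOf a G g ψs) (Icc 0 a) := hueq
  have hstep : ∀ k C, (∀ s ∈ Icc 0 a, |psiIter a G g f φ k s - ψs s| ≤ C) →
      ∀ s ∈ Icc 0 a, |psiIter a G g f φ (k + 1) s - ψs s| ≤ (L1 + L2) * M0 * C := by
    intro k C hC s hs
    have hdiff : ∀ x ∈ Icc 0 a, |uOf a G g (psiIter a G g f φ k) x - u x| ≤ M0 * C :=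
      fun x hx => hu hx ▸ abs_uOf_sub_uOf_le ha hG hGint (hψ k).1 hψs hC hx
    rw [psiIter_succ, mul_assoc]
    exact abs_nemytskii_sub_le hL1 hL2 hLip hφm hub
      (fun x hx => abs_uOf_le ha hG hGint hgb (hψ k).2 hx) hdiff hs
  have hgeom := abs_sub_le_of_contracting_iterate isCompact_Icc ⟨t₀, ht₀⟩ (hψ 0).1 hψs
    (mul_nonneg (add_nonneg hL1 hL2) hM0_nonneg) hq hstep (fun x hx => hd.2 ⟨x, hx, rfl⟩) k
  calc |uOf a G g (psiIter a G g f φ k) t - u t|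
      = |uOf a G g (psiIter a G g f φ k) t - uOf a G g ψs t| := by rw [← hu ht]
    _ ≤ M0 * (((L1 + L2) * M0) ^ k / (1 - (L1 + L2) * M0) * d) :=
        abs_uOf_sub_uOf_le ha hG hGint (hψ k).1 hψs hgeom ht
    _ = M0 * (((L1 + L2) * M0) ^ k / (1 - (L1 + L2) * M0)) * d := by ring

/-- Under the assumptions of the existence theorem, the iterative method converges with
`‖u_k − u‖ ≤ M0 p_k d`, where `p_k = q^k/(1−q)`, `q = (L1+L2) M0`, `d = ‖ψ₁ − ψ₀‖`, and `u` is
the exact solution of the integral equation. -/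
theorem iterative_method_convergence
    (a : ℝ) (ha : 0 < a)
    (φ : ℝ → ℝ) (hφc : ContinuousOn φ (Icc 0 a)) (hφm : MapsTo φ (Icc 0 a) (Icc 0 a))
    (G : ℝ → ℝ → ℝ)
    (hG : ContinuousOn (fun p : ℝ × ℝ => G p.1 p.2) (Icc 0 a ×ˢ Icc 0 a))
    (g : ℝ → ℝ) (hg : ContinuousOn g (Icc 0 a))
    (M0 : ℝ) (hM0 : IsGreatest ((fun t => ∫ s in (0:ℝ)..a, |G t s|) '' Icc 0 a) M0)
    (ng : ℝ) (hng : IsGreatest ((fun t => |g t|) '' Icc 0 a) ng)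
    (f : ℝ → ℝ → ℝ → ℝ)
    (hfc : ContinuousOn (fun p : ℝ × ℝ × ℝ => f p.1 p.2.1 p.2.2)
      (Icc 0 a ×ˢ (univ : Set ℝ) ×ˢ (univ : Set ℝ)))
    (M : ℝ) (hM : 0 < M)
    (hbound : ∀ t ∈ Icc (0:ℝ) a, ∀ u v : ℝ,
      |u| ≤ ng + M0 * M → |v| ≤ ng + M0 * M → |f t u v| ≤ M)
    (L1 L2 : ℝ) (hL1 : 0 ≤ L1) (hL2 : 0 ≤ L2)
    (hLip : ∀ t ∈ Icc (0:ℝ) a, ∀ u1 u2 v1 v2 : ℝ,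
      |u1| ≤ ng + M0 * M → |u2| ≤ ng + M0 * M →
      |v1| ≤ ng + M0 * M → |v2| ≤ ng + M0 * M →
      |f t u2 v2 - f t u1 v1| ≤ L1 * |u2 - u1| + L2 * |v2 - v1|)
    (hq : (L1 + L2) * M0 < 1)
    (u : ℝ → ℝ) (huc : ContinuousOn u (Icc 0 a))
    (hub : ∀ t ∈ Icc (0:ℝ) a, |u t| ≤ ng + M0 * M)
    (hueq : ∀ t ∈ Icc (0:ℝ) a,
      u t = g t + ∫ s in (0:ℝ)..a, G t s * f s (u s) (u (φ s)))
    (d : ℝ)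
    (hd : IsGreatest
      ((fun t => |psiIter a G g f φ 1 t - psiIter a G g f φ 0 t|) '' Icc 0 a) d) :
    ∀ k : ℕ, ∀ t ∈ Icc (0:ℝ) a,
      |uOf a G g (psiIter a G g f φ k) t - u t|
        ≤ M0 * (((L1 + L2) * M0) ^ k / (1 - (L1 + L2) * M0)) * d :=
  iterative_method_convergence_general a φ hφc hφm G hG g hg M0 hM0 ng hng f hfc M hbound L1 L2 hL1
    hL2 hLip hq u huc hub hueq d hd
end
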